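/- arXiv:1710.05640 — 4 statements merged into one kernel-verified Lean document; each statement's English description precedes it below -/
import Mathlib

section
/- If G_L is connected, then for every routing M the set of physical links whose individual failure disconnects the logical network equals the set of physical links shared by the utilized link sets of all spanning trees; that is, R(M) = ⋂_{τ} E_P(τ,M), where the intersection ranges over all spanning trees τ of G_L. (Paper's Lemma 2.) -/
/-- A spanning tree of the logical network `G`: a simple graph on the same vertex
set that is a subgraph of `G`, connected, and acyclic. -/
def IsSpanningTree {V_L : Type*} (G τ : SimpleGraph V_L) : Prop :=
  τ ≤ G ∧ τ.Connected ∧ τ.IsAcyclic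

/-- The surviving graph `G∖e` after failure of the physical link `e`, under routing `M`. -/
def survivingGraph {V_L E_P : Type*} (G : SimpleGraph V_L) (M : Sym2 V_L → Set E_P)
    (e : E_P) : SimpleGraph V_L :=
  SimpleGraph.fromEdgeSet {μ | μ ∈ G.edgeSet ∧ e ∉ M μ}

/-- `E_P(τ,M)`: the physical links utilized by the routing of the branches of `τ`. -/
def utilizedLinks {V_L E_P : Type*} (M : Sym2 V_L → Set E_P) (τ : SimpleGraph V_L) :
    Set E_P :=
  ⋃ μ ∈ τ.edgeSet, M μ

/-- `R(M)`: the physical links whose individual failure disconnects the logical network. -/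
def disconnectingLinks {V_L E_P : Type*} (G : SimpleGraph V_L)
    (M : Sym2 V_L → Set E_P) : Set E_P :=
  {e | ¬ (survivingGraph G M e).Connected}

/-
`G∖e` is connected iff some spanning tree of `G` avoids `e`: a spanning tree of `G∖e` is one
of `G` avoiding `e`, and a spanning tree of `G` avoiding `e` lies inside `G∖e` and connects it.
-/

open SimpleGraph

section
variable {V_L E_P : Type*} {G τ : SimpleGraph V_L} {M : Sym2 V_L → Set E_P} {e : E_P}

lemma survivingGraph_le : survivingGraph G M e ≤ G := by
  simp only [survivingGraph, fromEdgeSet_le]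
  exact fun μ hμ ↦ hμ.1.1

lemma le_survivingGraph_iff (hτ : τ ≤ G) :
    τ ≤ survivingGraph G M e ↔ e ∉ utilizedLinks M τ := by
  simp only [survivingGraph, le_fromEdgeSet_iff, utilizedLinks, Set.mem_iUnion, not_exists]
  exact ⟨fun h μ hμ ↦ (h hμ).2, fun h μ hμ ↦ ⟨edgeSet_mono hτ hμ, h μ hμ⟩⟩

lemma connected_survivingGraph_iff :
    (survivingGraph G M e).Connected ↔ ∃ τ, IsSpanningTree G τ ∧ e ∉ utilizedLinks M τ := by
  constructor
  · intro h
    obtain ⟨τ, hτ, hτ_tree⟩ := h.exists_isTree_le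
    have hτG : τ ≤ G := hτ.trans survivingGraph_le
    exact ⟨τ, ⟨hτG, hτ_tree.connected, hτ_tree.isAcyclic⟩, (le_survivingGraph_iff hτG).1 hτ⟩
  · rintro ⟨τ, ⟨hτG, hτ_conn, -⟩, he⟩
    exact hτ_conn.mono ((le_survivingGraph_iff hτG).2 he)

end

theorem disconnectingLinks_eq_iInter_utilizedLinks_general
    {V_L E_P : Type*}
    (G_L : SimpleGraph V_L) (M : Sym2 V_L → Set E_P) :
    disconnectingLinks G_L M =
      ⋂ τ, ⋂ (_ : IsSpanningTree G_L τ), utilizedLinks M τ := by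
  ext e
  simp [disconnectingLinks, connected_survivingGraph_iff]

/-- Paper's Lemma 2: `R(M)` equals the intersection of `E_P(τ,M)` over all spanning
trees `τ` of the (connected) logical network. -/
theorem disconnectingLinks_eq_iInter_utilizedLinks
    {V_L E_P : Type*} [Fintype V_L] [Fintype E_P]
    (G_L : SimpleGraph V_L) (hG : G_L.Connected) (M : Sym2 V_L → Set E_P) :
    disconnectingLinks G_L M =
      ⋂ τ, ⋂ (_ : IsSpanningTree G_L τ), utilizedLinks M τ :=
  disconnectingLinks_eq_iInter_utilizedLinks_general G_L M
end

section
/- Let ρ assign to each edge of G a failure probability with 0 < ρ e < 1. If H* is a Steiner subgraph for S that maximizes the survivable probability ∏_{e ∈ H.edgeSet}(1 − ρ e) among all Steiner subgraphs for S, then (i) H* is acyclic, and (ii) H* minimizes the total cost ∑_{e ∈ H.edgeSet} (−Real.log(1 − ρ e)) among all Steiner subgraphs for S; that is, the maximal protecting spanning tree's mapping is a minimum Steiner tree for the terminal set S with edge costs c e = −ln(1 − ρ e). (Paper's Theorem 3.) -/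
/-!
A cycle of a connected graph contains a non-bridge edge, and deleting it leaves a Steiner
subgraph whose survival product has lost a factor in `(0, 1)`, so it is strictly larger:
a maximizer is acyclic. The cost of a subgraph is `-log` of its survival product, which is
decreasing, so a maximizer of the product minimizes the cost.
-/

/-- A Steiner subgraph for the terminal set `S`: a connected subgraph of `G`
containing all terminals. -/
def IsSteinerSubgraph {V : Type*} (G : SimpleGraph V) (S : Set V) (H : G.Subgraph) :
    Prop :=
  S ⊆ H.verts ∧ H.Connected

open Finset Real

lemma Finset.prod_lt_prod_erase_of_lt_one {ι : Type*} [DecidableEq ι] {s : Finset ι}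
    {f : ι → ℝ} {a : ι} (ha : a ∈ s) (hf : ∀ i ∈ s, 0 < f i) (hfa : f a < 1) :
    ∏ i ∈ s, f i < ∏ i ∈ s.erase a, f i := by
  rw [← mul_prod_erase s f ha]
  exact mul_lt_of_lt_one_left (prod_pos fun i hi => hf i (mem_of_mem_erase hi)) hfa

lemma Finset.sum_neg_log_le_of_prod_le {ι : Type*} {s t : Finset ι} {f : ι → ℝ}
    (hs : ∀ i ∈ s, 0 < f i) (ht : ∀ i ∈ t, 0 < f i) (h : ∏ i ∈ t, f i ≤ ∏ i ∈ s, f i) :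
    ∑ i ∈ s, -log (f i) ≤ ∑ i ∈ t, -log (f i) := by
  simp only [sum_neg_distrib, ← log_prod fun i hi => (hs i hi).ne',
    ← log_prod fun i hi => (ht i hi).ne']
  exact neg_le_neg (log_le_log (prod_pos ht) h)

namespace SimpleGraph.Subgraph

variable {V : Type*} {G : SimpleGraph V}

theorem edgeSet_deleteEdges (H : G.Subgraph) (s : Set (Sym2 V)) :
    (H.deleteEdges s).edgeSet = H.edgeSet \ s := by
  ext e
  induction e using Sym2.ind
  simp

theorem toFinset_edgeSet_deleteEdges_singleton [Finite V] [DecidableEq V] (H : G.Subgraph)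
    (e : Sym2 V) :
    (Set.toFinite (H.deleteEdges {e}).edgeSet).toFinset =
      (Set.toFinite H.edgeSet).toFinset.erase e := by
  ext
  simp [edgeSet_deleteEdges, and_comm]

theorem Connected.exists_connected_deleteEdges_of_not_isAcyclic {H : G.Subgraph}
    (hH : H.Connected) (hcyc : ¬ H.coe.IsAcyclic) :
    ∃ e ∈ H.edgeSet, (H.deleteEdges {e}).Connected := by
  simp only [isAcyclic_iff_forall_adj_isBridge, not_forall] at hcyc
  obtain ⟨a, b, hab, hnb⟩ := hcyc
  refine ⟨s(a, b), hab, ?_⟩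
  have hconn := hH.coe.connected_delete_edge_of_not_isBridge hnb
  rw [deleteEdges_coe_eq, Set.image_singleton, Sym2.map_mk] at hconn
  exact Subgraph.connected_iff'.mpr hconn

end SimpleGraph.Subgraph

/-- Paper's Theorem 3: a Steiner subgraph for `S` maximizing the survivable
probability `∏_{e} (1 - ρ e)` is acyclic, and it is a minimum Steiner tree for `S`
with edge costs `c e = -ln(1 - ρ e)`. -/
theorem max_survivable_steiner_is_min_cost_steiner_tree
    {V : Type*} [Fintype V] (G : SimpleGraph V) (S : Set V)
    (ρ : Sym2 V → ℝ) (hρ : ∀ e ∈ G.edgeSet, 0 < ρ e ∧ ρ e < 1)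
    (Hs : G.Subgraph) (hHs : IsSteinerSubgraph G S Hs)
    (hmax : ∀ H : G.Subgraph, IsSteinerSubgraph G S H →
      ∏ e ∈ (Set.toFinite H.edgeSet).toFinset, (1 - ρ e) ≤
        ∏ e ∈ (Set.toFinite Hs.edgeSet).toFinset, (1 - ρ e)) :
    Hs.coe.IsAcyclic ∧
      ∀ H : G.Subgraph, IsSteinerSubgraph G S H →
        ∑ e ∈ (Set.toFinite Hs.edgeSet).toFinset, (-Real.log (1 - ρ e)) ≤
          ∑ e ∈ (Set.toFinite H.edgeSet).toFinset, (-Real.log (1 - ρ e)) := by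
  classical
  have hpos (H : G.Subgraph) : ∀ e ∈ (Set.toFinite H.edgeSet).toFinset, 0 < 1 - ρ e :=
    fun e he => sub_pos.mpr (hρ e (H.edgeSet_subset (Set.Finite.mem_toFinset _ |>.mp he))).2
  refine ⟨?_, fun H hH => sum_neg_log_le_of_prod_le (hpos Hs) (hpos H) (hmax H hH)⟩
  by_contra hcyc
  obtain ⟨e, he, hconn⟩ := hHs.2.exists_connected_deleteEdges_of_not_isAcyclic hcyc
  refine (hmax (Hs.deleteEdges {e}) ⟨hHs.1, hconn⟩).not_gt ?_
  rw [SimpleGraph.Subgraph.toFinset_edgeSet_deleteEdges_singleton]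
  exact prod_lt_prod_erase_of_lt_one (Set.Finite.mem_toFinset _ |>.mpr he) (hpos Hs)
    (sub_lt_self 1 (hρ e (Hs.edgeSet_subset he)).1)
end

section
/- Let H₁ and H₂ be Steiner subgraphs for S whose edge sets are disjoint (H₁.edgeSet ∩ H₂.edgeSet = ∅). Then for every edge e of G and all terminals u, v ∈ S, the vertices u and v are reachable from one another in the graph G.deleteEdges {e}; that is, no single physical link failure disconnects the terminal set when the physical network packs two edge-disjoint Steiner trees for the terminals. (Paper's Theorem 4: two edge-disjoint Steiner trees guarantee survivability of the cross-layer routing with logical link augmentation.) -/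
/-- Paper's Theorem 4: if two edge-disjoint Steiner subgraphs (trees) for the terminal
set `S` are packed in `G`, then no single link failure disconnects the terminals: for
every edge `e` of `G`, all terminals remain mutually reachable in `G.deleteEdges {e}`. -/
theorem two_edge_disjoint_steiner_trees_survivable
    {V : Type*} [Fintype V] (G : SimpleGraph V) (S : Set V)
    (H₁ H₂ : G.Subgraph)
    (h₁ : IsSteinerSubgraph G S H₁) (h₂ : IsSteinerSubgraph G S H₂)
    (hdisj : H₁.edgeSet ∩ H₂.edgeSet = ∅) :
    ∀ e ∈ G.edgeSet, ∀ u ∈ S, ∀ v ∈ S, (G.deleteEdges {e}).Reachable u v := by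
  intro e he u hu v hv
  have key : ∀ H : G.Subgraph, IsSteinerSubgraph G S H → e ∉ H.edgeSet →
      (G.deleteEdges {e}).Reachable u v := by
    intro H hH heH
    have hr : H.coe.Reachable ⟨u, hH.1 hu⟩ ⟨v, hH.1 hv⟩ := hH.2 _ _
    let f : H.coe →g G.deleteEdges {e} :=
      { toFun := Subtype.val
        map_rel' := by
          intro a b hab
          rw [SimpleGraph.deleteEdges_adj]
          refine ⟨H.adj_sub hab, ?_⟩
          intro heq
          exact heH (Set.mem_singleton_iff.1 heq ▸ (SimpleGraph.Subgraph.mem_edgeSet.2 hab)) }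
    exact hr.map f
  by_cases h : e ∈ H₁.edgeSet
  · have : e ∉ H₂.edgeSet := fun h2 => (Set.eq_empty_iff_forall_notMem.1 hdisj e) ⟨h, h2⟩
    exact key H₂ h₂ this
  · exact key H₁ h₁ h
end

section
/- Suppose G_L is connected and ρ : E_P → ℝ satisfies 0 ≤ ρ e ≤ 1 for all e. Then for every routing M and every spanning tree τ of G_L, ∏_{e ∈ E_P(τ,M)} (1 − ρ e) ≤ ∏_{e ∈ R(M)} (1 − ρ e); that is, the survivable probability of any single protecting spanning tree is a lower bound on the survivable probability of the cross-layer network under the routing M. (The paper's claim, validated in Section VI, that the maximal protecting spanning tree provides a lower bound estimation for the survivable probability of a cross-layer network.) -/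
/-- The survivable probability of a set `S` of physical links: `∏_{e ∈ S} (1 - ρ e)`. -/
noncomputable def survProb {E_P : Type*} [Fintype E_P] (ρ : E_P → ℝ) (S : Set E_P) : ℝ :=
  ∏ e ∈ (Set.toFinite S).toFinset, (1 - ρ e)

/-- The survivable probability of any single protecting spanning tree is a lower bound
on the survivable probability of the cross-layer network under the routing `M`. -/
theorem survProb_tree_le_survProb_network
    {V_L E_P : Type*} [Fintype V_L] [Fintype E_P]
    (G_L : SimpleGraph V_L) (hG : G_L.Connected)
    (ρ : E_P → ℝ) (hρ : ∀ e, 0 ≤ ρ e ∧ ρ e ≤ 1)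
    (M : Sym2 V_L → Set E_P) (τ : SimpleGraph V_L) (hτ : IsSpanningTree G_L τ) :
    survProb ρ (utilizedLinks M τ) ≤ survProb ρ (disconnectingLinks G_L M) := by
  obtain ⟨hle, hconn, -⟩ := hτ
  have hsub : disconnectingLinks G_L M ⊆ utilizedLinks M τ := by
    intro e he
    by_contra hne
    apply he
    refine SimpleGraph.Connected.mono ?_ hconn
    intro u v huv
    rw [survivingGraph, SimpleGraph.fromEdgeSet_adj]
    refine ⟨⟨hle huv, ?_⟩, huv.ne⟩
    intro hmem
    exact hne (Set.mem_biUnion (τ.mem_edgeSet.2 huv) hmem)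
  classical
  unfold survProb
  set s := (Set.toFinite (disconnectingLinks G_L M)).toFinset with hs
  set t := (Set.toFinite (utilizedLinks M τ)).toFinset with ht
  have hst : s ⊆ t := by
    intro e
    simp only [hs, ht, Set.Finite.mem_toFinset]
    exact fun h => hsub h
  have key := Finset.prod_sdiff (f := fun e => (1 - ρ e)) hst
  rw [← key]
  have h1 : ∏ e ∈ t \ s, (1 - ρ e) ≤ 1 :=
    Finset.prod_le_one (fun i _ => by linarith [(hρ i).2]) (fun i _ => by linarith [(hρ i).1])
  have h2 : (0:ℝ) ≤ ∏ e ∈ s, (1 - ρ e) :=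
    Finset.prod_nonneg (fun i _ => by linarith [(hρ i).2])
  nlinarith
end
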